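/- Let G be a finite simple graph and let e = x_i x_j be an edge of G. Then (I(G)^{2} : x_i x_j) = I(G − {x_i, x_j}) + ( x_p x_q : x_p ∈ N_{G−x_j}(x_i), x_q ∈ N_{G−x_i}(x_j), x_p ≠ x_q ) + ( x_t : x_t ∈ N_G(x_i) ∩ N_G(x_j) ), where G − U denotes the graph obtained by deleting the vertices in U and all edges meeting U. -/

import Mathlib

open MvPolynomial

noncomputable section

/-! Generalities on graded pieces, Betti numbers and Castelnuovo–Mumford regularity
of homogeneous ideals in a polynomial ring, via the Koszul complex. -/

variable (K : Type) [Field K] (n : ℕ)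

/-- The degree `d` graded piece of an ideal `I ⊆ K[x_1, …, x_n]`, as a `K`-subspace
(`⊥` for negative `d`). -/
def degPiece (I : Ideal (MvPolynomial (Fin n) K)) (d : ℤ) :
    Submodule K (MvPolynomial (Fin n) K) :=
  if 0 ≤ d then (Submodule.restrictScalars K I) ⊓ homogeneousSubmodule (Fin n) K d.toNat
  else ⊥

theorem mulX_mem (I : Ideal (MvPolynomial (Fin n) K)) (k : Fin n) (d : ℤ)
    {x : MvPolynomial (Fin n) K} (hx : x ∈ degPiece K n I d) :
    (X k : MvPolynomial (Fin n) K) * x ∈ degPiece K n I (d + 1) := by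
  by_cases h : 0 ≤ d
  · rw [degPiece, if_pos h, Submodule.mem_inf] at hx
    rw [degPiece, if_pos (by omega : (0:ℤ) ≤ d + 1), Submodule.mem_inf]
    constructor
    · exact Ideal.mul_mem_left I _ hx.1
    · rw [mem_homogeneousSubmodule]
      have h2 := (isHomogeneous_X K k).mul ((mem_homogeneousSubmodule _ _).1 hx.2)
      have h3 : (d + 1).toNat = 1 + d.toNat := by omega
      rw [h3]
      exact h2
  · rw [degPiece, if_neg h, Submodule.mem_bot] at hx
    subst hx
    rw [mul_zero]
    exact Submodule.zero_mem _

/-- Multiplication by the variable `x_k`, as a map between graded pieces. -/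
def mulXmap (I : Ideal (MvPolynomial (Fin n) K)) (k : Fin n) (d e : ℤ) (h : e = d + 1) :
    degPiece K n I d →ₗ[K] degPiece K n I e :=
  LinearMap.restrict (LinearMap.mulLeft K (X k)) (by
    intro x hx
    subst h
    simpa using mulX_mem K n I k d hx)

/-- The differential, in internal degree `j`, of the complex obtained by tensoring the
ideal `I` with the Koszul complex on `x_1, …, x_n`; its homology computes
`Tor_i(I, K)_j`, whose dimension is the graded Betti number `β_{i,j}(I)`. -/
def koszulD (I : Ideal (MvPolynomial (Fin n) K)) (j i : ℕ) :
    ({T : Finset (Fin n) // T.card = i + 1} → degPiece K n I ((j : ℤ) - (i + 1)))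
      →ₗ[K] ({T : Finset (Fin n) // T.card = i} → degPiece K n I ((j : ℤ) - i)) :=
  LinearMap.pi fun T => ∑ k : Fin n,
    if h : k ∈ T.1 then 0
    else ((-1 : K) ^ (T.1.filter (fun l => l < k)).card) •
      ((mulXmap K n I k ((j : ℤ) - (i + 1)) ((j : ℤ) - i) (by ring)).comp
        (LinearMap.proj (⟨insert k T.1, by
          rw [Finset.card_insert_of_notMem h, T.2]⟩ : {T : Finset (Fin n) // T.card = i + 1})))

/-- The cycles of the (internal degree `j`) Koszul complex of `I` in homological degree `i`. -/
def kerChain (I : Ideal (MvPolynomial (Fin n) K)) (j : ℕ) :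
    (i : ℕ) → Submodule K ({T : Finset (Fin n) // T.card = i} → degPiece K n I ((j : ℤ) - i))
  | 0 => ⊤
  | (i + 1) => LinearMap.ker (koszulD K n I j i)

/-- The graded Betti number `β_{i,j}(I) = dim_K Tor_i(I, K)_j`. -/
def betti (I : Ideal (MvPolynomial (Fin n) K)) (i j : ℕ) : ℕ :=
  Module.finrank K (kerChain K n I j i) -
    Module.finrank K
      ((LinearMap.range (koszulD K n I j i) ⊓ kerChain K n I j i) : Submodule K _)

/-- The Castelnuovo–Mumford regularity `reg(I) = max { j - i | β_{i,j}(I) ≠ 0 }`. -/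
def reg (I : Ideal (MvPolynomial (Fin n) K)) : ℤ :=
  sSup {r : ℤ | ∃ i j : ℕ, betti K n I i j ≠ 0 ∧ r = (j : ℤ) - i}

/-- The squarefree part of a monomial ideal: the ideal generated by the squarefree
monomials belonging to it. -/
def sqfreePart (I : Ideal (MvPolynomial (Fin n) K)) : Ideal (MvPolynomial (Fin n) K) :=
  Ideal.span {m | m ∈ I ∧ ∃ A : Finset (Fin n), m = ∏ v ∈ A, X v}

/-- The `s`-th symbolic power of a (squarefree monomial) ideal:
the intersection of the `s`-th powers of its minimal primes; `S` for `s ≤ 0`. -/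
def symbPow (I : Ideal (MvPolynomial (Fin n) K)) (s : ℤ) : Ideal (MvPolynomial (Fin n) K) :=
  if s ≤ 0 then ⊤ else ⨅ p ∈ I.minimalPrimes, p ^ s.toNat

/-- `ssp I s` is `I^{s}`, the squarefree part of the `s`-th symbolic power of `I`. -/
def ssp (I : Ideal (MvPolynomial (Fin n) K)) (s : ℤ) : Ideal (MvPolynomial (Fin n) K) :=
  sqfreePart K n (symbPow K n I s)

/-- `sqPow I s` is `I^[s]`, the squarefree part of the ordinary power `I^s`. -/
def sqPow (I : Ideal (MvPolynomial (Fin n) K)) (s : ℕ) : Ideal (MvPolynomial (Fin n) K) :=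
  sqfreePart K n (I ^ s)

/-- The height of an ideal: the minimum of the heights of its minimal primes. -/
def heightI (I : Ideal (MvPolynomial (Fin n) K)) : ℕ∞ :=
  ⨅ p : I.minimalPrimes, Order.height (⟨p.1, p.2.1.1⟩ : PrimeSpectrum (MvPolynomial (Fin n) K))

/-- The colon ideal `(I : u)`. -/
def colonOf (I : Ideal (MvPolynomial (Fin n) K)) (u : MvPolynomial (Fin n) K) :
    Ideal (MvPolynomial (Fin n) K) :=
  Submodule.colon I (Ideal.span {u})

/-- `u` is a minimal monomial generator of the monomial ideal `I`:
`u` is a monomial belonging to `I` and `u/x_k ∉ I` for every variable `x_k` dividing `u`. -/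
def IsMinGen (I : Ideal (MvPolynomial (Fin n) K)) (u : MvPolynomial (Fin n) K) : Prop :=
  ∃ d : Fin n →₀ ℕ, u = monomial d (1 : K) ∧ u ∈ I ∧
    ∀ k : Fin n, d k ≠ 0 → monomial (d - Finsupp.single k 1) (1 : K) ∉ I

/-! Graph-theoretic notions. -/

/-- The graph obtained from `G` by deleting the vertices in `U` (and all edges meeting `U`),
on the same vertex set. -/
def delVerts (G : SimpleGraph (Fin n)) (U : Set (Fin n)) : SimpleGraph (Fin n) where
  Adj v w := G.Adj v w ∧ v ∉ U ∧ w ∉ U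
  symm := ⟨fun _ _ h => ⟨h.1.symm, h.2.2, h.2.1⟩⟩
  loopless := ⟨fun v h => G.loopless.1 v h.1⟩


/-- The edge ideal `I(G)` of a graph `G` on the vertex set `{x_1, …, x_n}`. -/
def edgeIdeal (G : SimpleGraph (Fin n)) : Ideal (MvPolynomial (Fin n) K) :=
  Ideal.span {m | ∃ v w, G.Adj v w ∧ m = X v * X w}

/-- `a`, `b` enumerate the endpoints of a matching of `G` of size `k`:
the edges `a i b i` are pairwise disjoint edges of `G`. -/
def IsMatching (G : SimpleGraph (Fin n)) (k : ℕ) (a b : Fin k → Fin n) : Prop :=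
  (∀ i, G.Adj (a i) (b i)) ∧
    ∀ i j, i ≠ j → a i ≠ a j ∧ b i ≠ b j ∧ a i ≠ b j

/-- The matching number `match(G)`. -/
def matchNum (G : SimpleGraph (Fin n)) : ℕ :=
  sSup {k | ∃ a b : Fin k → Fin n, IsMatching n G k a b}

/-- An induced matching: a matching such that no edge of `G` other than the matching edges
joins two of its vertices. -/
def IsInducedMatching (G : SimpleGraph (Fin n)) (k : ℕ) (a b : Fin k → Fin n) : Prop :=
  IsMatching n G k a b ∧ ∀ i j, i ≠ j →
    ¬ G.Adj (a i) (a j) ∧ ¬ G.Adj (a i) (b j) ∧ ¬ G.Adj (b i) (a j) ∧ ¬ G.Adj (b i) (b j)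

/-- The induced matching number `ind-match(G)`. -/
def indMatchNum (G : SimpleGraph (Fin n)) : ℕ :=
  sSup {k | ∃ a b : Fin k → Fin n, IsInducedMatching n G k a b}

/-- An ordered matching `{a_i b_i}`: the `a_i` form an independent set and
`a_i b_j ∈ E(G)` implies `i ≤ j`. -/
def IsOrderedMatching (G : SimpleGraph (Fin n)) (k : ℕ) (a b : Fin k → Fin n) : Prop :=
  IsMatching n G k a b ∧ (∀ i j, ¬ G.Adj (a i) (a j)) ∧ ∀ i j, G.Adj (a i) (b j) → i ≤ j

/-- The ordered matching number `ord-match(G)`. -/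
def ordMatchNum (G : SimpleGraph (Fin n)) : ℕ :=
  sSup {k | ∃ a b : Fin k → Fin n, IsOrderedMatching n G k a b}

/-- A graph is chordal if it has no induced cycle of length at least four. -/
def IsChordal (G : SimpleGraph (Fin n)) : Prop :=
  ∀ k : ℕ, 4 ≤ k → ∀ f : ZMod k → Fin n, Function.Injective f →
    ¬ (∀ i j : ZMod k, G.Adj (f i) (f j) ↔ (j = i + 1 ∨ i = j + 1))


/-- The star triangle graph with `t` triangles: vertex `0` is the common vertex of all the
triangles, and for `0 ≤ i < t` the vertices `2i+1`, `2i+2` are the other two vertices of the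
`i`-th triangle. -/
def starTriangle (t : ℕ) : SimpleGraph (Fin (2 * t + 1)) where
  Adj u v := u ≠ v ∧ ((u : ℕ) = 0 ∨ (v : ℕ) = 0 ∨ ((u : ℕ) - 1) / 2 = ((v : ℕ) - 1) / 2)
  symm := by
    constructor
    intro u v h
    exact ⟨h.1.symm, by tauto⟩
  loopless := by constructor; intro u h; exact h.1 rfl

end

/-! A squarefree monomial `x_A` lies in `I(G)^{(2)}` exactly when every vertex cover `C` of `G`
meets `A` twice: a prime `P ⊇ I(G)` contains the variables of the cover `{v | x_v ∈ P}`, and the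
prime `(x_v : v ∈ C)` of a cover contains a minimal prime of `I(G)`. Taking for `C` the complement
of `A \ {v}` shows that `A \ {v}` still contains an edge, for every vertex `v`.

The colon of a squarefree monomial ideal by `x_i x_j` is generated by the `x_{A \ {i, j}}`. Removing
`x_i`, and then `x_j`, from `A` leaves an edge; if neither edge avoids both, they yield neighbours
`p` of `x_i` and `q` of `x_j` in `A \ {x_i, x_j}`, giving `x_p x_q` or, when `p = q`, the common
neighbour `x_t`. Conversely each proposed generator times `x_i x_j` is a product of two edges, hence
in `I(G)^2`, or is a triangle, which every vertex cover meets twice. -/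

namespace MvPolynomial

variable {σ R : Type*}

theorem support_mul_monomial_one [CommSemiring R] (p : MvPolynomial σ R) (d : σ →₀ ℕ) :
    (p * monomial d 1).support = p.support.map (addRightEmbedding d) :=
  AddMonoidAlgebra.support_coeff_mul_single p _ (by simp) _

theorem colon_span_monomial_image [CommSemiring R] (S : Set (σ →₀ ℕ)) (d : σ →₀ ℕ) :
    (Ideal.span ((fun s => monomial s (1 : R)) '' S)).colon
        (Ideal.span {monomial d (1 : R)} : Set (MvPolynomial σ R)) =
      Ideal.span ((fun s => monomial s (1 : R)) '' ((· - d) '' S)) := by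
  ext f
  simp [mem_ideal_span_monomial_image, support_mul_monomial_one, tsub_le_iff_right]

theorem prod_X_eq_monomial [CommSemiring R] (A : Finset σ) :
    ∏ v ∈ A, (X v : MvPolynomial σ R) = monomial (∑ v ∈ A, Finsupp.single v 1) 1 :=
  (monomial_sum_one A _).symm

theorem sum_single_one_sub_sum_single_one [DecidableEq σ] (A B : Finset σ) :
    ∑ v ∈ A, Finsupp.single v 1 - ∑ v ∈ B, Finsupp.single v 1 =
      ∑ v ∈ A \ B, Finsupp.single v (1 : ℕ) := by
  ext w
  simp only [Finsupp.tsub_apply, Finsupp.finsetSum_apply, Finsupp.single_apply,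
    Finset.sum_ite_eq', Finset.mem_sdiff]
  split_ifs <;> simp_all

theorem colon_span_prod_X [CommSemiring R] [DecidableEq σ] (𝒜 : Set (Finset σ)) (B : Finset σ) :
    (Ideal.span ((fun A => ∏ v ∈ A, (X v : MvPolynomial σ R)) '' 𝒜)).colon
        (Ideal.span {∏ v ∈ B, (X v : MvPolynomial σ R)} : Set (MvPolynomial σ R)) =
      Ideal.span ((fun A => ∏ v ∈ A \ B, (X v : MvPolynomial σ R)) '' 𝒜) := by
  simp_rw [prod_X_eq_monomial]
  simpa only [Set.image_image, sum_single_one_sub_sum_single_one] using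
    colon_span_monomial_image (R := R) ((fun A => ∑ v ∈ A, Finsupp.single v 1) '' 𝒜)
      (∑ v ∈ B, Finsupp.single v 1)

theorem X_mul_X_dvd_prod_X [CommSemiring R] {A : Finset σ} {v w : σ} (hvw : v ≠ w)
    (hv : v ∈ A) (hw : w ∈ A) : (X v : MvPolynomial σ R) * X w ∣ ∏ u ∈ A, X u := by
  classical
  rw [← Finset.prod_pair hvw]
  exact Finset.prod_dvd_prod_of_subset _ _ _ (Finset.insert_subset hv (by simpa using hw))

theorem isPrime_span_X_image [CommRing R] [IsDomain R] (s : Set σ) :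
    (Ideal.span (X '' s : Set (MvPolynomial σ R))).IsPrime := by
  classical
  set P := Ideal.span (X '' s : Set (MvPolynomial σ R))
  let φ : MvPolynomial σ R →ₐ[R] MvPolynomial σ R := aeval fun v => if v ∈ s then 0 else X v
  -- `φ` is the identity modulo `P`, so its kernel lies in `P`.
  have hφ : (Ideal.Quotient.mkₐ R P).comp φ = Ideal.Quotient.mkₐ R P := by
    refine algHom_ext fun v => ?_
    by_cases hv : v ∈ s
    · have hXv : X v ∈ P := Ideal.subset_span ⟨v, hv, rfl⟩
      simpa [φ, hv] using (Ideal.Quotient.eq_zero_iff_mem.2 hXv).symm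
    · simp [φ, hv]
  have hker : P = RingHom.ker φ := by
    refine le_antisymm (Ideal.span_le.2 ?_) fun f hf => ?_
    · rintro _ ⟨v, hv, rfl⟩
      simp [φ, hv]
    · rw [← Ideal.Quotient.eq_zero_iff_mem, ← Ideal.Quotient.mkₐ_eq_mk R, ← hφ,
        AlgHom.comp_apply, RingHom.mem_ker.1 hf, map_zero]
  rw [hker]
  exact RingHom.ker_isPrime _

theorem exists_ne_mem_of_prod_X_mem_span_X_image_sq [CommSemiring R] [Nontrivial R]
    {s : Set σ} {A : Finset σ} (h : ∏ v ∈ A, (X v : MvPolynomial σ R) ∈ Ideal.span (X '' s) ^ 2) :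
    ∃ u ∈ A, ∃ w ∈ A, u ≠ w ∧ u ∈ s ∧ w ∈ s := by
  classical
  have hsq : Ideal.span (X '' s : Set (MvPolynomial σ R)) ^ 2 ≤
      Ideal.span ((fun d => monomial d 1) ''
        {d | ∃ u ∈ s, ∃ w ∈ s, d = Finsupp.single u 1 + Finsupp.single w 1}) := by
    rw [pow_two, Ideal.span_mul_span', Ideal.span_le]
    rintro _ ⟨_, ⟨u, hu, rfl⟩, _, ⟨w, hw, rfl⟩, rfl⟩
    exact Ideal.subset_span ⟨_, ⟨u, hu, w, hw, rfl⟩, by simp [X, monomial_mul]⟩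
  rw [prod_X_eq_monomial] at h
  obtain ⟨_, ⟨u, hu, w, hw, rfl⟩, hle⟩ := mem_ideal_span_monomial_image.1 (hsq h)
    (∑ v ∈ A, Finsupp.single v 1) (by simp [support_monomial])
  have hu' := Finsupp.le_def.1 hle u
  have hw' := Finsupp.le_def.1 hle w
  simp only [Finsupp.add_apply, Finsupp.finsetSum_apply, Finsupp.single_apply,
    Finset.sum_ite_eq', ↓reduceIte] at hu' hw'
  refine ⟨u, ?_, w, ?_, fun huw => ?_, hu, hw⟩
  · by_contra hA; simp [hA] at hu'
  · by_contra hA; simp [hA] at hw'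
  · subst huw
    rw [if_pos rfl] at hu'
    split_ifs at hu' <;> omega

end MvPolynomial
namespace SimpleGraph

variable {V : Type*} [DecidableEq V] {G : SimpleGraph V}

theorem exists_adj_of_adj_avoiding {A : Finset V} {x y a b : V}
    (hB : ∀ v ∈ A \ {x, y}, ∀ w ∈ A \ {x, y}, ¬ G.Adj v w)
    (ha : a ∈ A) (hb : b ∈ A) (hax : a ≠ x) (hbx : b ≠ x) (hab : G.Adj a b) :
    ∃ q ∈ A \ {x, y}, G.Adj y q := by
  by_cases hay : a = y
  · subst hay
    exact ⟨b, by simp [hb, hbx, hab.ne'], hab⟩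
  by_cases hby : b = y
  · subst hby
    exact ⟨a, by simp [ha, hax, hab.ne], hab.symm⟩
  exact absurd hab (hB a (by simp [ha, hax, hay]) b (by simp [hb, hbx, hby]))

theorem exists_adj_or_exists_adj_pair_or_exists_common_neighbor {A : Finset V} {x y : V}
    (hx : ∃ a ∈ A, ∃ b ∈ A, a ≠ x ∧ b ≠ x ∧ G.Adj a b)
    (hy : ∃ a ∈ A, ∃ b ∈ A, a ≠ y ∧ b ≠ y ∧ G.Adj a b) :
    (∃ v ∈ A \ {x, y}, ∃ w ∈ A \ {x, y}, G.Adj v w) ∨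
      (∃ p ∈ A \ {x, y}, ∃ q ∈ A \ {x, y}, G.Adj x p ∧ G.Adj y q ∧ p ≠ q) ∨
      ∃ t ∈ A \ {x, y}, G.Adj x t ∧ G.Adj y t := by
  by_cases hB : ∃ v ∈ A \ {x, y}, ∃ w ∈ A \ {x, y}, G.Adj v w
  · exact Or.inl hB
  push Not at hB
  obtain ⟨a, ha, b, hb, hax, hbx, hab⟩ := hx
  obtain ⟨q, hq, hyq⟩ := exists_adj_of_adj_avoiding hB ha hb hax hbx hab
  obtain ⟨a', ha', b', hb', hay, hby, hab'⟩ := hy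
  obtain ⟨p, hp, hxp⟩ := exists_adj_of_adj_avoiding (x := y) (y := x)
    (by rwa [Finset.pair_comm]) ha' hb' hay hby hab'
  rw [Finset.pair_comm] at hp
  by_cases hpq : p = q
  · subst hpq
    exact Or.inr (Or.inr ⟨p, hp, hxp, hyq⟩)
  · exact Or.inr (Or.inl ⟨p, hp, q, hq, hxp, hyq, hpq⟩)

end SimpleGraph

section EdgeIdeal

variable {K : Type} [Field K] {n : ℕ}

theorem sqfreePart_eq_span_prod_X (I : Ideal (MvPolynomial (Fin n) K)) :
    sqfreePart K n I = Ideal.span ((fun A => ∏ v ∈ A, X v) '' {A | ∏ v ∈ A, X v ∈ I}) := by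
  rw [sqfreePart]
  congr 1
  ext m
  constructor
  · rintro ⟨hm, A, rfl⟩
    exact ⟨A, hm, rfl⟩
  · rintro ⟨A, hA, rfl⟩
    exact ⟨hA, A, rfl⟩

theorem colonOf_sqfreePart_prod_X (I : Ideal (MvPolynomial (Fin n) K)) (B : Finset (Fin n)) :
    colonOf K n (sqfreePart K n I) (∏ v ∈ B, X v) =
      Ideal.span ((fun A => ∏ v ∈ A \ B, X v) '' {A | ∏ v ∈ A, X v ∈ I}) := by
  rw [colonOf, sqfreePart_eq_span_prod_X, colon_span_prod_X]

theorem prod_X_mem_colonOf_sqfreePart {I : Ideal (MvPolynomial (Fin n) K)} {A B : Finset (Fin n)}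
    (hAB : Disjoint A B) (h : (∏ v ∈ A, X v) * ∏ v ∈ B, X v ∈ I) :
    ∏ v ∈ A, X v ∈ colonOf K n (sqfreePart K n I) (∏ v ∈ B, X v) := by
  rw [colonOf_sqfreePart_prod_X]
  rw [← Finset.prod_union hAB] at h
  exact Ideal.subset_span ⟨A ∪ B, h, by simp only [Finset.union_sdiff_cancel_right hAB]⟩

theorem mem_symbPow_two_iff {I : Ideal (MvPolynomial (Fin n) K)} {f : MvPolynomial (Fin n) K} :
    f ∈ symbPow K n I 2 ↔ ∀ p ∈ I.minimalPrimes, f ∈ p ^ 2 := by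
  simp [symbPow]

theorem pow_two_le_symbPow_two (I : Ideal (MvPolynomial (Fin n) K)) : I ^ 2 ≤ symbPow K n I 2 :=
  fun _ hf => mem_symbPow_two_iff.2 fun _ hp => Ideal.pow_right_mono hp.1.2 2 hf

theorem edgeIdeal_le_span_X_image {G : SimpleGraph (Fin n)} {C : Set (Fin n)}
    (hC : G.IsVertexCover C) : edgeIdeal K n G ≤ Ideal.span (X '' C) := by
  rw [edgeIdeal, Ideal.span_le]
  rintro _ ⟨v, w, hvw, rfl⟩
  rcases hC hvw with hv | hw
  · exact Ideal.mul_mem_right _ _ (Ideal.subset_span ⟨v, hv, rfl⟩)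
  · exact Ideal.mul_mem_left _ _ (Ideal.subset_span ⟨w, hw, rfl⟩)

theorem isVertexCover_setOf_X_mem {G : SimpleGraph (Fin n)} {p : Ideal (MvPolynomial (Fin n) K)}
    [hp : p.IsPrime] (hGp : edgeIdeal K n G ≤ p) : G.IsVertexCover {v | X v ∈ p} :=
  fun v w hvw => hp.mem_or_mem (hGp (Ideal.subset_span ⟨v, w, hvw, rfl⟩))

theorem prod_X_mem_symbPow_two_iff {G : SimpleGraph (Fin n)} {A : Finset (Fin n)} :
    ∏ v ∈ A, (X v : MvPolynomial (Fin n) K) ∈ symbPow K n (edgeIdeal K n G) 2 ↔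
      ∀ C, G.IsVertexCover C → ∃ u ∈ A, ∃ w ∈ A, u ≠ w ∧ u ∈ C ∧ w ∈ C := by
  rw [mem_symbPow_two_iff]
  constructor
  · intro h C hC
    have := isPrime_span_X_image (R := K) C
    obtain ⟨p, hp, hpC⟩ := Ideal.exists_minimalPrimes_le (edgeIdeal_le_span_X_image (K := K) hC)
    exact exists_ne_mem_of_prod_X_mem_span_X_image_sq (Ideal.pow_right_mono hpC 2 (h p hp))
  · intro h p hp
    have := hp.1.1
    obtain ⟨u, hu, w, hw, huw, hup, hwp⟩ := h _ (isVertexCover_setOf_X_mem hp.1.2)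
    exact Ideal.mem_of_dvd _ (X_mul_X_dvd_prod_X huw hu hw) (pow_two p ▸ Ideal.mul_mem_mul hup hwp)

theorem exists_adj_avoiding_of_prod_X_mem_symbPow_two {G : SimpleGraph (Fin n)}
    {A : Finset (Fin n)}
    (h : ∏ v ∈ A, (X v : MvPolynomial (Fin n) K) ∈ symbPow K n (edgeIdeal K n G) 2)
    (v : Fin n) : ∃ a ∈ A, ∃ b ∈ A, a ≠ v ∧ b ≠ v ∧ G.Adj a b := by
  by_contra! hA
  have hC : G.IsVertexCover (↑(A.erase v))ᶜ := SimpleGraph.isVertexCover_compl.2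
    fun a ha b hb _ hab => hA a (Finset.mem_of_mem_erase ha) b (Finset.mem_of_mem_erase hb)
      (Finset.ne_of_mem_erase ha) (Finset.ne_of_mem_erase hb) hab
  obtain ⟨u, hu, w, hw, huw, huC, hwC⟩ := prod_X_mem_symbPow_two_iff.1 h _ hC
  simp_all

theorem mul_mem_symbPow_two_of_adj {G : SimpleGraph (Fin n)} {a b c d : Fin n}
    (hab : G.Adj a b) (hcd : G.Adj c d) :
    (X a * X b : MvPolynomial (Fin n) K) * (X c * X d) ∈ symbPow K n (edgeIdeal K n G) 2 :=
  pow_two_le_symbPow_two _ <| pow_two (edgeIdeal K n G) ▸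
    Ideal.mul_mem_mul (Ideal.subset_span ⟨a, b, hab, rfl⟩) (Ideal.subset_span ⟨c, d, hcd, rfl⟩)

theorem prod_X_mem_symbPow_two_of_triangle {G : SimpleGraph (Fin n)} {a b c : Fin n}
    (hab : G.Adj a b) (hbc : G.Adj b c) (hac : G.Adj a c) :
    ∏ v ∈ {a, b, c}, (X v : MvPolynomial (Fin n) K) ∈ symbPow K n (edgeIdeal K n G) 2 :=
  prod_X_mem_symbPow_two_iff.2 fun C hC => by
    have := hC hab; have := hC hbc; have := hC hac
    grind [hab.ne, hbc.ne, hac.ne]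

end EdgeIdeal

/-- For any edge `x_i x_j` of `G`,
`(I(G)^{2} : x_i x_j) = I(G - {x_i, x_j}) + (x_p x_q : x_p ∈ N_{G-x_j}(x_i),
x_q ∈ N_{G-x_i}(x_j), x_p ≠ x_q) + (x_t : x_t ∈ N_G(x_i) ∩ N_G(x_j))`. -/
theorem ssp_two_colon_edge_structure
    (K : Type) [Field K] (n : ℕ) (G : SimpleGraph (Fin n)) (xi xj : Fin n)
    (hadj : G.Adj xi xj) :
    colonOf K n (ssp K n (edgeIdeal K n G) 2) ((X xi : MvPolynomial (Fin n) K) * X xj) =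
      edgeIdeal K n (delVerts n G {xi, xj}) +
        Ideal.span {m | ∃ p q : Fin n, G.Adj xi p ∧ p ≠ xj ∧ G.Adj xj q ∧ q ≠ xi ∧
          p ≠ q ∧ m = (X p : MvPolynomial (Fin n) K) * X q} +
        Ideal.span {m | ∃ t : Fin n, G.Adj xi t ∧ G.Adj xj t ∧
          m = (X t : MvPolynomial (Fin n) K)} := by
  rw [ssp, ← Finset.prod_pair hadj.ne]
  refine le_antisymm ?_ (sup_le (sup_le ?_ ?_) ?_)
  · rw [colonOf_sqfreePart_prod_X, Ideal.span_le]
    rintro _ ⟨A, hA, rfl⟩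
    rcases G.exists_adj_or_exists_adj_pair_or_exists_common_neighbor (x := xi) (y := xj)
      (exists_adj_avoiding_of_prod_X_mem_symbPow_two hA xi)
      (exists_adj_avoiding_of_prod_X_mem_symbPow_two hA xj) with
      ⟨v, hv, w, hw, hvw⟩ | ⟨p, hp, q, hq, hip, hjq, hpq⟩ | ⟨t, ht, hit, hjt⟩
    · refine Ideal.mem_sup_left (Ideal.mem_sup_left (Ideal.mem_of_dvd _
        (X_mul_X_dvd_prod_X hvw.ne hv hw) (Ideal.subset_span ⟨v, w, ?_, rfl⟩)))
      simp_all [delVerts]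
    · refine Ideal.mem_sup_left (Ideal.mem_sup_right (Ideal.mem_of_dvd _
        (X_mul_X_dvd_prod_X hpq hp hq) (Ideal.subset_span ⟨p, q, hip, ?_, hjq, ?_, hpq, rfl⟩)))
        <;> simp_all
    · exact Ideal.mem_sup_right (Ideal.mem_of_dvd _
        (Finset.dvd_prod_of_mem _ ht) (Ideal.subset_span ⟨t, hit, hjt, rfl⟩))
  · rw [edgeIdeal, Ideal.span_le]
    rintro _ ⟨v, w, ⟨hvw, hv, hw⟩, rfl⟩
    rw [SetLike.mem_coe, ← Finset.prod_pair hvw.ne]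
    refine prod_X_mem_colonOf_sqfreePart (by simp_all [Finset.disjoint_left]) ?_
    simpa only [Finset.prod_pair hvw.ne, Finset.prod_pair hadj.ne] using
      mul_mem_symbPow_two_of_adj hvw hadj
  · rw [Ideal.span_le]
    rintro _ ⟨p, q, hip, hpj, hjq, hqi, hpq, rfl⟩
    rw [SetLike.mem_coe, ← Finset.prod_pair hpq]
    refine prod_X_mem_colonOf_sqfreePart
      (by simp_all [Finset.disjoint_left, hip.ne', hjq.ne']) ?_
    simpa only [Finset.prod_pair hpq, Finset.prod_pair hadj.ne, mul_mul_mul_comm, mul_comm] using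
      mul_mem_symbPow_two_of_adj hip hjq
  · rw [Ideal.span_le]
    rintro _ ⟨t, hit, hjt, rfl⟩
    rw [SetLike.mem_coe, ← Finset.prod_singleton X t]
    refine prod_X_mem_colonOf_sqfreePart (by simp [hit.ne', hjt.ne']) ?_
    rw [← Finset.prod_union (by simp [hit.ne', hjt.ne']), Finset.singleton_union]
    exact prod_X_mem_symbPow_two_of_triangle hit.symm hadj hjt.symm
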